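/- There exists a family B of 2λ+1 (s,t)-flows of G such that for every edge e ∈ E, B contains a flow f with f(e) = 0 whose value equals the maximum (s,t)-flow value of G − e; in other words, for every edge e the family B contains a maximum (s,t)-flow of the graph G − e. -/

import Mathlib

open Finset

/-- A finite directed multigraph on vertex type `V` with edge type `E`:
each edge `e` has a source `src e` and a target `tgt e`. -/
structure Digraph' (V E : Type) where
  src : E → V
  tgt : E → V

namespace Digraph'

variable {V E : Type} [Fintype V] [DecidableEq V] [Fintype E] [DecidableEq E]

/-- `h : E → ℕ` satisfies flow conservation at every vertex other than `s` and `t`: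
the sum over incoming edges equals the sum over outgoing edges. -/
def Conserves (G : Digraph' V E) (s t : V) (h : E → ℕ) : Prop :=
  ∀ v : V, v ≠ s → v ≠ t →
    ∑ e ∈ univ.filter (fun e => G.tgt e = v), h e =
      ∑ e ∈ univ.filter (fun e => G.src e = v), h e

/-- The value of `h`: the net flow out of `s`. -/
def flowValue (G : Digraph' V E) (s : V) (h : E → ℕ) : ℤ :=
  (∑ e ∈ univ.filter (fun e => G.src e = s), (h e : ℤ)) -
    ∑ e ∈ univ.filter (fun e => G.tgt e = s), (h e : ℤ)

/-- An `(s,t)`-flow of a unit-capacity digraph: a `{0,1}`-valued function on edges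
satisfying flow conservation at every vertex other than `s` and `t`. -/
def IsFlow (G : Digraph' V E) (s t : V) (f : E → ℕ) : Prop :=
  (∀ e, f e ≤ 1) ∧ G.Conserves s t f

/-- One step along an edge not belonging to `F`. -/
def stepAvoid (G : Digraph' V E) (F : Finset E) (u v : V) : Prop :=
  ∃ e, e ∉ F ∧ G.src e = u ∧ G.tgt e = v

/-- Reachability by a directed path using no edge of `F`. -/
def ReachAvoid (G : Digraph' V E) (F : Finset E) : V → V → Prop :=
  Relation.ReflTransGen (G.stepAvoid F)

/-- `C` is an `(s,t)`-cut: after deleting the edges of `C` there is no directed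
path from `s` to `t`. -/
def IsCut (G : Digraph' V E) (s t : V) (C : Finset E) : Prop :=
  ¬ G.ReachAvoid C s t

/-- An `(s,t)`-min-cut: an `(s,t)`-cut of minimum cardinality. -/
def IsMinCut (G : Digraph' V E) (s t : V) (C : Finset E) : Prop :=
  G.IsCut s t C ∧ ∀ C' : Finset E, G.IsCut s t C' → C.card ≤ C'.card

/-- A minimal `(s,t)`-cut: no proper subset of it is an `(s,t)`-cut. -/
def IsMinimalCut (G : Digraph' V E) (s t : V) (C : Finset E) : Prop :=
  G.IsCut s t C ∧ ∀ C' : Finset E, C' ⊂ C → ¬ G.IsCut s t C'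

/-- An edge is critical if it belongs to some `(s,t)`-min-cut. -/
def Critical (G : Digraph' V E) (s t : V) (e : E) : Prop :=
  ∃ C : Finset E, G.IsMinCut s t C ∧ e ∈ C

/-- `m` is the maximum `(s,t)`-flow value of `G − F`, i.e. the largest value of an
`(s,t)`-flow of `G` vanishing on every edge of `F`. -/
def IsMaxFlowValue (G : Digraph' V E) (s t : V) (F : Finset E) (m : ℤ) : Prop :=
  (∃ f, G.IsFlow s t f ∧ (∀ e ∈ F, f e = 0) ∧ G.flowValue s f = m) ∧
    ∀ f, G.IsFlow s t f → (∀ e ∈ F, f e = 0) → G.flowValue s f ≤ m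

/-- The residual graph `G_f` of a `{0,1}`-flow `f`: each edge with `f e = 1`
is reversed, each edge with `f e = 0` is kept as is. -/
def residual (G : Digraph' V E) (f : E → ℕ) : Digraph' V E where
  src e := if f e = 1 then G.tgt e else G.src e
  tgt e := if f e = 1 then G.src e else G.tgt e

end Digraph'

/-!
Call an edge *used* if every maximum flow uses it. A maximum flow contains `λ` edge-disjoint
`s`–`t` paths `P₁, …, P_λ`; their union `U` is again a maximum flow, so it contains every used
edge, and `U - Pᵢ` is a flow of value `λ - 1`, which is maximum in `G - e` for each used `e ∈ Pᵢ`.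

For the unused edges, give used edges capacity `λ + 1` and the others capacity `λ`. Every
`(s,t)`-cut then has capacity at least `λ(λ + 1)`: it has at least `λ` edges, and if exactly
`λ`, all of them are used. So there is an integral flow `h` of value `λ(λ + 1)` within these
capacities, and `h` splits into `λ + 1` unit flows (round `h / (λ + 1)` to a `{0,1}`-flow and
recurse). Each has value at most `λ`, hence exactly `λ`, and since `h e ≤ λ` on an unused edge
`e`, one of them avoids `e`.
-/

namespace Digraph'

variable {V E : Type}

def IsUnitAdjustment (lo hi φ ψ : E → ℕ) : Prop :=
  ∀ e, (φ e < ψ e → ψ e = φ e + 1 ∧ ψ e ≤ hi e) ∧ (ψ e < φ e → ψ e + 1 = φ e ∧ lo e ≤ ψ e)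

lemma IsUnitAdjustment.le_hi {lo hi φ ψ : E → ℕ} (h : IsUnitAdjustment lo hi φ ψ)
    (hφ : φ ≤ hi) : ψ ≤ hi := fun e => by
  by_cases hlt : φ e < ψ e
  · exact ((h e).1 hlt).2
  · exact (not_lt.1 hlt).trans (hφ e)

lemma IsUnitAdjustment.lo_le {lo hi φ ψ : E → ℕ} (h : IsUnitAdjustment lo hi φ ψ)
    (hφ : lo ≤ φ) : lo ≤ ψ := fun e => by
  by_cases hlt : ψ e < φ e
  · exact ((h e).2 hlt).2
  · exact (hφ e).trans (not_lt.1 hlt)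

variable [DecidableEq V] [Fintype E] (G : Digraph' V E)

def divergence : (E → ℕ) →+ V → ℤ where
  toFun f v := (∑ e ∈ univ.filter (fun e => G.src e = v), (f e : ℤ)) -
    ∑ e ∈ univ.filter (fun e => G.tgt e = v), (f e : ℤ)
  map_zero' := by ext; simp
  map_add' f g := by ext v; simp only [Pi.add_apply, Nat.cast_add, sum_add_distrib]; ring

lemma divergence_tsub {f g : E → ℕ} (hgf : g ≤ f) :
    G.divergence (f - g) = G.divergence f - G.divergence g :=
  eq_sub_of_add_eq (by rw [← map_add, tsub_add_cancel_of_le hgf])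

lemma divergence_single [DecidableEq E] (e : E) :
    G.divergence (Pi.single e 1) = Pi.single (G.src e) 1 - Pi.single (G.tgt e) 1 := by
  ext v
  simp only [divergence, AddMonoidHom.coe_mk, ZeroHom.coe_mk, Pi.sub_apply, Pi.single_apply]
  push_cast
  rw [sum_ite_eq', sum_ite_eq']
  simp [eq_comm]

lemma flowValue_eq_divergence [Fintype V] [DecidableEq E] (s : V) (f : E → ℕ) :
    G.flowValue s f = G.divergence f s := rfl

lemma conserves_iff [Fintype V] [DecidableEq E] {s t : V} {f : E → ℕ} :
    G.Conserves s t f ↔ ∀ v, v ≠ s → v ≠ t → G.divergence f v = 0 := by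
  refine forall_congr' fun v => forall_congr' fun _ => forall_congr' fun _ => ?_
  simp only [divergence, AddMonoidHom.coe_mk, ZeroHom.coe_mk, sub_eq_zero]
  exact_mod_cast eq_comm

def outEdges (S : Finset V) : Finset E := univ.filter fun e => G.src e ∈ S ∧ G.tgt e ∉ S

def inEdges (S : Finset V) : Finset E := univ.filter fun e => G.tgt e ∈ S ∧ G.src e ∉ S

lemma sum_divergence (f : E → ℕ) (S : Finset V) :
    ∑ v ∈ S, G.divergence f v =
      ∑ e ∈ G.outEdges S, (f e : ℤ) - ∑ e ∈ G.inEdges S, (f e : ℤ) := by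
  simp only [divergence, AddMonoidHom.coe_mk, ZeroHom.coe_mk, sum_sub_distrib,
    sum_fiberwise_eq_sum_filter, outEdges, inEdges]
  rw [← sum_filter_add_sum_filter_not (univ.filter fun e => G.src e ∈ S) (G.tgt · ∈ S),
    ← sum_filter_add_sum_filter_not (univ.filter fun e => G.tgt e ∈ S) (G.src · ∈ S),
    filter_filter, filter_filter, filter_filter, filter_filter]
  simp only [and_comm]
  ring

lemma sum_divergence_univ [Fintype V] (f : E → ℕ) : ∑ v, G.divergence f v = 0 := by
  simp [sum_divergence, outEdges, inEdges]

lemma sum_divergence_of_conserves [Fintype V] [DecidableEq E] {s t : V} {f : E → ℕ}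
    (hf : G.Conserves s t f) {S : Finset V} (hs : s ∈ S) (ht : t ∉ S) :
    ∑ v ∈ S, G.divergence f v = G.divergence f s :=
  sum_eq_single_of_mem s hs fun v hv hvs => G.conserves_iff.1 hf v hvs (ne_of_mem_of_not_mem hv ht)

-- The invariant of a residual-graph search from `p` that has explored the vertex set `X`.
def HasAdjustmentWithin (lo hi φ : E → ℕ) (p x : V) (X : Finset V) : Prop :=
  ∃ ψ, IsUnitAdjustment lo hi φ ψ ∧
    G.divergence ψ = G.divergence φ + Pi.single p 1 - Pi.single x 1 ∧
    ∀ e, ψ e ≠ φ e → G.src e ∈ X ∧ G.tgt e ∈ X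

variable {G} {lo hi φ : E → ℕ} {p x : V} {X : Finset V} {e : E}

lemma HasAdjustmentWithin.mono (h : G.HasAdjustmentWithin lo hi φ p x X) {Y : Finset V}
    (hXY : X ⊆ Y) : G.HasAdjustmentWithin lo hi φ p x Y := by
  obtain ⟨ψ, hψ, hdiv, hsupp⟩ := h
  exact ⟨ψ, hψ, hdiv, fun e he => (hsupp e he).imp (@hXY _) (@hXY _)⟩

lemma HasAdjustmentWithin.extend_out [DecidableEq E]
    (h : G.HasAdjustmentWithin lo hi φ p (G.src e) X) (he : φ e < hi e) (hsrc : G.src e ∈ X)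
    (htgt : G.tgt e ∉ X) :
    G.HasAdjustmentWithin lo hi φ p (G.tgt e) (insert (G.tgt e) X) := by
  obtain ⟨ψ, hψ, hdiv, hsupp⟩ := h
  have hψe : ψ e = φ e := by_contra fun hne => htgt (hsupp e hne).2
  refine ⟨ψ + Pi.single e 1, fun e' => ?_, ?_, fun e' he' => ?_⟩
  · rcases eq_or_ne e' e with rfl | hne
    · simp only [Pi.add_apply, Pi.single_eq_same, hψe, true_and]; omega
    · simpa only [Pi.add_apply, Pi.single_eq_of_ne hne, add_zero] using hψ e'
  · rw [map_add, hdiv, divergence_single]; abel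
  · rcases eq_or_ne e' e with rfl | hne
    · exact ⟨mem_insert_of_mem hsrc, mem_insert_self _ _⟩
    · simp only [Pi.add_apply, Pi.single_eq_of_ne hne, add_zero] at he'
      exact (hsupp e' he').imp (mem_insert_of_mem ·) (mem_insert_of_mem ·)

lemma HasAdjustmentWithin.extend_in [DecidableEq E]
    (h : G.HasAdjustmentWithin lo hi φ p (G.tgt e) X) (he : lo e < φ e) (htgt : G.tgt e ∈ X)
    (hsrc : G.src e ∉ X) :
    G.HasAdjustmentWithin lo hi φ p (G.src e) (insert (G.src e) X) := by
  obtain ⟨ψ, hψ, hdiv, hsupp⟩ := h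
  have hψe : ψ e = φ e := by_contra fun hne => hsrc (hsupp e hne).1
  have hle : Pi.single e 1 ≤ ψ := fun e' => by
    rcases eq_or_ne e' e with rfl | hne
    · simp only [Pi.single_eq_same, hψe]; omega
    · simp [Pi.single_eq_of_ne hne]
  refine ⟨ψ - Pi.single e 1, fun e' => ?_, ?_, fun e' he' => ?_⟩
  · rcases eq_or_ne e' e with rfl | hne
    · simp only [Pi.sub_apply, Pi.single_eq_same, hψe]; omega
    · simpa only [Pi.sub_apply, Pi.single_eq_of_ne hne, tsub_zero] using hψ e'
  · rw [G.divergence_tsub hle, hdiv, divergence_single]; abel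
  · rcases eq_or_ne e' e with rfl | hne
    · exact ⟨mem_insert_self _ _, mem_insert_of_mem htgt⟩
    · simp only [Pi.sub_apply, Pi.single_eq_of_ne hne, tsub_zero] at he'
      exact (hsupp e' he').imp (mem_insert_of_mem ·) (mem_insert_of_mem ·)

variable (G)

lemma exists_adjustment_or_cut [Fintype V] [DecidableEq E] (lo hi φ : E → ℕ) (p q : V) :
    (∃ ψ, IsUnitAdjustment lo hi φ ψ ∧
      G.divergence ψ = G.divergence φ + Pi.single p 1 - Pi.single q 1) ∨
    ∃ S : Finset V, p ∈ S ∧ q ∉ S ∧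
      (∀ e ∈ G.outEdges S, hi e ≤ φ e) ∧ ∀ e ∈ G.inEdges S, φ e ≤ lo e := by
  classical
  set Explored : Finset (Finset V) :=
    univ.filter fun X => p ∈ X ∧ ∀ x ∈ X, G.HasAdjustmentWithin lo hi φ p x X
  have hp : {p} ∈ Explored := by
    simp only [Explored, mem_filter, mem_univ, mem_singleton, true_and, forall_eq]
    exact ⟨φ, fun e => ⟨fun h => (h.ne rfl).elim, fun h => (h.ne rfl).elim⟩, by simp,
      fun e h => (h rfl).elim⟩
  obtain ⟨X, hX, hmax⟩ := Explored.exists_max_image card ⟨_, hp⟩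
  simp only [Explored, mem_filter, mem_univ, true_and] at hX hmax
  obtain ⟨hpX, hreach⟩ := hX
  have hstuck : ∀ x ∉ X, G.HasAdjustmentWithin lo hi φ p x (insert x X) → False := by
    intro x hx h
    have := hmax _ ⟨mem_insert_of_mem hpX, (forall_mem_insert _ _ _).2
      ⟨h, fun y hy => (hreach y hy).mono (subset_insert _ _)⟩⟩
    simp [card_insert_of_notMem hx] at this
  by_cases hq : q ∈ X
  · obtain ⟨ψ, hψ, hdiv, -⟩ := hreach q hq
    exact Or.inl ⟨ψ, hψ, hdiv⟩
  refine Or.inr ⟨X, hpX, hq, fun e he => ?_, fun e he => ?_⟩ <;>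
    simp only [outEdges, inEdges, mem_filter, mem_univ, true_and] at he <;>
    by_contra! hlt
  · exact hstuck _ he.2 ((hreach _ he.1).extend_out hlt he.1 he.2)
  · exact hstuck _ he.2 ((hreach _ he.1).extend_in hlt he.1 he.2)

lemma exists_flow_saturating_cut [Fintype V] [DecidableEq E] {s t : V} (hst : s ≠ t)
    (c : E → ℕ) :
    ∃ h ≤ c, G.Conserves s t h ∧ ∃ S : Finset V, s ∈ S ∧ t ∉ S ∧
      (∀ e ∈ G.outEdges S, h e = c e) ∧ ∀ e ∈ G.inEdges S, h e = 0 := by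
  classical
  obtain ⟨h, hh, hmax⟩ := ((Iic c).filter (G.Conserves s t)).exists_max_image
    (G.divergence · s) ⟨0, by simp [conserves_iff]⟩
  rw [mem_filter, mem_Iic] at hh
  obtain ⟨hhc, hcons⟩ := hh
  refine ⟨h, hhc, hcons, ?_⟩
  rcases G.exists_adjustment_or_cut 0 c h s t with ⟨ψ, hψ, hdiv⟩ | ⟨S, hs, ht, hout, hin⟩
  · have hψc : ψ ≤ c := hψ.le_hi hhc
    have hψcons : G.Conserves s t ψ := G.conserves_iff.2 fun v hvs hvt => by
      simp [hdiv, G.conserves_iff.1 hcons v hvs hvt, hvs, hvt]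
    have := hmax ψ (mem_filter.2 ⟨mem_Iic.2 hψc, hψcons⟩)
    simp [hdiv, hst.symm] at this
  · exact ⟨S, hs, ht, fun e he => le_antisymm (hhc e) (hout e he),
      fun e he => Nat.le_zero.1 (hin e he)⟩

lemma exists_unit_flows_sum_le [Fintype V] [DecidableEq E] {s t : V} (hst : s ≠ t) :
    ∀ (m : ℕ) (f : E → ℕ), G.Conserves s t f → G.divergence f s = m →
      ∃ P : Fin m → E → ℕ,
        (∀ i, G.divergence (P i) = Pi.single s 1 - Pi.single t 1) ∧ ∑ i, P i ≤ f
  | 0, f, _, _ => ⟨finZeroElim, finZeroElim, by simp⟩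
  | m + 1, f, hf, hval => by
    rcases G.exists_adjustment_or_cut 0 f 0 s t with ⟨ψ, hψ, hdiv⟩ | ⟨S, hs, ht, hout, -⟩
    · simp only [map_zero, zero_add] at hdiv
      have hψf : ψ ≤ f := hψ.le_hi fun _ => Nat.zero_le _
      have hcons : G.Conserves s t (f - ψ) := G.conserves_iff.2 fun v hvs hvt => by
        simp [G.divergence_tsub hψf, hdiv, G.conserves_iff.1 hf v hvs hvt, hvs, hvt]
      obtain ⟨P, hP, hPf⟩ := exists_unit_flows_sum_le hst m (f - ψ) hcons (by
        simp [G.divergence_tsub hψf, hdiv, hval, hst.symm])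
      refine ⟨Fin.cons ψ P, Fin.cases hdiv hP, ?_⟩
      rw [Fin.sum_univ_succ]
      simpa [add_comm] using add_le_of_le_tsub_right_of_le hψf hPf
    · have hcut := G.sum_divergence_of_conserves hf hs ht
      rw [sum_divergence, sum_eq_zero fun e he => by simp [Nat.le_zero.1 (hout e he)], hval]
        at hcut
      have : (0 : ℤ) ≤ ∑ e ∈ G.inEdges S, (f e : ℤ) := sum_nonneg fun _ _ => by positivity
      omega

lemma sum_divergence_le_of_boundary {S : Finset V} {f₁ f₂ : E → ℕ}
    (hout : ∀ e ∈ G.outEdges S, f₁ e ≤ f₂ e) (hin : ∀ e ∈ G.inEdges S, f₂ e ≤ f₁ e) :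
    ∑ v ∈ S, G.divergence f₁ v ≤ ∑ v ∈ S, G.divergence f₂ v := by
  rw [sum_divergence, sum_divergence]
  gcongr with e he e he
  · exact_mod_cast hout e he
  · exact_mod_cast hin e he

def IsCirculation (f : E → ℕ) : Prop := G.divergence f = 0

def glue (s t : V) : Digraph' V E where
  src e := if G.src e = t then s else G.src e
  tgt e := if G.tgt e = t then s else G.tgt e

lemma conserves_iff_isCirculation_glue [Fintype V] [DecidableEq E] {s t : V} (hst : s ≠ t)
    {f : E → ℕ} : G.Conserves s t f ↔ (G.glue s t).IsCirculation f := by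
  have glue_eq : ∀ {x v : V}, v ≠ s → v ≠ t → ((if x = t then s else x) = v ↔ x = v) :=
    fun hvs hvt => by split_ifs <;> simp_all [eq_comm]
  have hdiv : ∀ v, v ≠ s → v ≠ t → (G.glue s t).divergence f v = G.divergence f v :=
    fun v hvs hvt => by simp [divergence, glue, glue_eq hvs hvt]
  have hdiv_t : (G.glue s t).divergence f t = 0 := by
    simp [divergence, glue, apply_ite (· = t), hst]
  rw [conserves_iff]
  refine ⟨fun hf => funext fun v => ?_, fun hf v hvs hvt => hdiv v hvs hvt ▸ congr_fun hf v⟩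
  have hother : ∀ v, v ≠ s → (G.glue s t).divergence f v = 0 := fun v hvs => by
    by_cases hvt : v = t
    · exact hvt ▸ hdiv_t
    · exact (hdiv v hvs hvt).trans (hf v hvs hvt)
  by_cases hvs : v = s
  · rw [hvs, Pi.zero_apply, ← (G.glue s t).sum_divergence_univ f,
      sum_eq_single s (fun v _ hvs => hother v hvs) (by simp)]
  · exact hother v hvs

/-- `h / (K + 1)` has net flow `0` out of `S`, and `g` dominates it on the edges leaving `S`
and is dominated by it on the edges entering `S`. -/
lemma sum_divergence_nonneg_of_boundary [DecidableEq E] (K : ℕ) {h g : E → ℕ}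
    (hh : G.IsCirculation h) (hK : ∀ e, h e ≤ K + 1) {S : Finset V}
    (hout : ∀ e ∈ G.outEdges S, min (h e) 1 ≤ g e) (hin : ∀ e ∈ G.inEdges S, g e ≤ h e - K) :
    0 ≤ ∑ v ∈ S, G.divergence g v := by
  have hcross : ∑ v ∈ S, G.divergence h v ≤ ∑ v ∈ S, G.divergence ((K + 1) • g) v := by
    refine G.sum_divergence_le_of_boundary (fun e he => ?_) (fun e he => ?_) <;>
      rw [Pi.smul_apply, smul_eq_mul] <;>
      rcases Nat.eq_zero_or_pos (g e) with h0 | h0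
    · have := hout e he; rw [h0] at this; omega
    · exact (hK e).trans (Nat.le_mul_of_pos_right _ h0)
    · simp [h0]
    · have := hin e he; have := hK e
      rw [show g e = 1 by omega]; omega
  rw [hh, map_nsmul] at hcross
  simp only [Pi.zero_apply, sum_const_zero, Pi.smul_apply, nsmul_eq_mul, ← mul_sum] at hcross
  exact nonneg_of_mul_nonneg_right (by rwa [mul_comm] at hcross) (by positivity)

/-- A rounding of the fractional circulation `h / (K + 1)`. -/
lemma exists_unit_circulation_between [Fintype V] [DecidableEq E] (K : ℕ) {h : E → ℕ}
    (hh : G.IsCirculation h) (hK : ∀ e, h e ≤ K + 1) :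
    ∃ g, G.IsCirculation g ∧ ∀ e, h e - K ≤ g e ∧ g e ≤ min (h e) 1 := by
  set lo : E → ℕ := fun e => h e - K with hlo_def
  set hi : E → ℕ := fun e => min (h e) 1 with hhi_def
  set excess : (E → ℕ) → ℕ := fun g => ∑ e, (g e - hi e)
  obtain ⟨g, ⟨hg, hlo⟩, hmin⟩ := (measure excess).wf.has_min
    {g | G.IsCirculation g ∧ lo ≤ g} ⟨h, hh, fun e => Nat.sub_le _ _⟩
  refine ⟨g, hg, fun e => ⟨hlo e, ?_⟩⟩
  -- otherwise lower `g` on `e` and reroute the unit from `src e` to `tgt e`, decreasing `excess`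
  by_contra! hgt
  have hle : Pi.single e 1 ≤ g := fun e' => by
    rcases eq_or_ne e' e with rfl | hne
    · simp only [Pi.single_eq_same]; omega
    · simp [Pi.single_eq_of_ne hne]
  set g₁ := g - Pi.single e 1
  have hdiv₁ : G.divergence g₁ = Pi.single (G.tgt e) 1 - Pi.single (G.src e) 1 := by
    rw [G.divergence_tsub hle, hg, divergence_single]; abel
  have hlo₁ : lo ≤ g₁ := fun e' => by
    rcases eq_or_ne e' e with rfl | hne
    · simp only [g₁, hlo_def, Pi.sub_apply, Pi.single_eq_same]; have := hK e'; omega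
    · simpa [g₁, Pi.single_eq_of_ne hne] using hlo e'
  have hdec : excess g₁ < excess g := by
    refine sum_lt_sum (fun e' _ => Nat.sub_le_sub_right (Nat.sub_le _ _) _) ⟨e, mem_univ _, ?_⟩
    simp only [g₁, hhi_def, Pi.sub_apply, Pi.single_eq_same]; omega
  rcases G.exists_adjustment_or_cut lo hi g₁ (G.src e) (G.tgt e) with
    ⟨ψ, hψ, hdiv⟩ | ⟨S, hs, ht, hout, hin⟩
  · refine hmin ψ ⟨?_, hψ.lo_le hlo₁⟩ (lt_of_le_of_lt (sum_le_sum fun e' _ => ?_) hdec)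
    · rw [IsCirculation, hdiv, hdiv₁]; abel
    · by_cases hlt : g₁ e' < ψ e'
      · have := (hψ e').1 hlt; omega
      · omega
  · have hcut := G.sum_divergence_nonneg_of_boundary K hh hK hout hin
    rw [hdiv₁] at hcut
    simp [sum_sub_distrib, sum_pi_single', hs, ht] at hcut

lemma exists_unit_circulations_sum_eq [Fintype V] [DecidableEq E] :
    ∀ (K : ℕ) (h : E → ℕ), G.IsCirculation h → (∀ e, h e ≤ K) →
      ∃ g : Fin K → E → ℕ, (∀ i, G.IsCirculation (g i) ∧ ∀ e, g i e ≤ 1) ∧ ∑ i, g i = h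
  | 0, h, _, hK => ⟨finZeroElim, finZeroElim, by ext e; simp [Nat.le_zero.1 (hK e)]⟩
  | K + 1, h, hh, hK => by
    obtain ⟨g₀, hg₀, hbounds⟩ := G.exists_unit_circulation_between K hh hK
    have hle : g₀ ≤ h := fun e => (hbounds e).2.trans (min_le_left _ _)
    obtain ⟨g, hg, hsum⟩ := exists_unit_circulations_sum_eq K (h - g₀)
      (by rw [IsCirculation, G.divergence_tsub hle, hh, hg₀, sub_zero])
      (fun e => by have := (hbounds e).1; simp only [Pi.sub_apply]; omega)
    refine ⟨Fin.cons g₀ g, Fin.cases ⟨hg₀, fun e => (hbounds e).2.trans (min_le_right _ _)⟩ hg, ?_⟩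
    rw [Fin.sum_univ_succ]
    simp [hsum, add_tsub_cancel_of_le hle]

variable {G} [Fintype V] [DecidableEq E] {s t : V}

lemma conserves_and_flowValue_of_divergence_eq (hst : s ≠ t) {f : E → ℕ} {n : ℤ}
    (hf : G.divergence f = n • (Pi.single s 1 - Pi.single t 1)) :
    G.Conserves s t f ∧ G.flowValue s f = n :=
  ⟨G.conserves_iff.2 fun v hvs hvt => by simp [hf, hvs, hvt],
    by simp [flowValue_eq_divergence, hf, hst.symm]⟩

lemma flowValue_eq_sum_outEdges_sub_sum_inEdges {f : E → ℕ} (hf : G.Conserves s t f) {S : Finset V}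
    (hs : s ∈ S) (ht : t ∉ S) :
    G.flowValue s f = ∑ e ∈ G.outEdges S, (f e : ℤ) - ∑ e ∈ G.inEdges S, (f e : ℤ) := by
  rw [flowValue_eq_divergence, ← G.sum_divergence_of_conserves hf hs ht, sum_divergence]

lemma flowValue_le_sum_outEdges {f : E → ℕ} (hf : G.IsFlow s t f) {S : Finset V}
    (hs : s ∈ S) (ht : t ∉ S) : G.flowValue s f ≤ ∑ e ∈ G.outEdges S, (f e : ℤ) := by
  rw [flowValue_eq_sum_outEdges_sub_sum_inEdges hf.2 hs ht]
  linarith [sum_nonneg fun e (_ : e ∈ G.inEdges S) => Int.natCast_nonneg (f e)]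

variable (G) in
def UsedByMaxFlows (s t : V) (lam : ℕ) (e : E) : Prop :=
  ∀ f, G.IsFlow s t f → G.flowValue s f = lam → f e = 1

variable {lam : ℕ}

lemma exists_flows_avoiding_usedByMaxFlows (hst : s ≠ t) (hmax : G.IsMaxFlowValue s t ∅ lam) :
    ∃ d : Fin lam → E → ℕ, (∀ i, G.IsFlow s t (d i)) ∧
      ∀ e, G.UsedByMaxFlows s t lam e →
        ∃ i, d i e = 0 ∧ G.IsMaxFlowValue s t {e} (G.flowValue s (d i)) := by
  obtain ⟨⟨f, hf, -, hval⟩, hub⟩ := hmax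
  obtain ⟨P, hP, hPf⟩ := G.exists_unit_flows_sum_le hst lam f hf.2 hval
  set f₂ := ∑ i, P i
  have hf₂ : ∀ e, f₂ e ≤ 1 := fun e => (hPf e).trans (hf.1 e)
  have hf₂_max : G.Conserves s t f₂ ∧ G.flowValue s f₂ = lam :=
    conserves_and_flowValue_of_divergence_eq hst (by simp [f₂, map_sum, hP, mul_sub])
  have hP_le : ∀ i, P i ≤ f₂ := fun i => single_le_sum (fun _ _ => zero_le) (mem_univ i)
  have hd : ∀ i, G.Conserves s t (f₂ - P i) ∧ G.flowValue s (f₂ - P i) = (lam - 1 : ℤ) :=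
    fun i => conserves_and_flowValue_of_divergence_eq hst (by
      rw [G.divergence_tsub (hP_le i), hP i, map_sum]; simp [hP, sub_smul, mul_sub])
  refine ⟨fun i => f₂ - P i, fun i => ⟨fun e => (Nat.sub_le _ _).trans (hf₂ e), (hd i).1⟩,
    fun e he => ?_⟩
  obtain ⟨i, -, hi⟩ := exists_ne_zero_of_sum_ne_zero (s := univ) (f := (P · e))
    (by rw [← Finset.sum_apply]; exact (he f₂ ⟨hf₂, hf₂_max.1⟩ hf₂_max.2).trans_ne one_ne_zero)
  have hde : f₂ e - P i e = 0 := by have := hP_le i e; have := hf₂ e; omega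
  refine ⟨i, hde, ⟨⟨_, ⟨fun e => (Nat.sub_le _ _).trans (hf₂ e), (hd i).1⟩, by simpa, rfl⟩, ?_⟩⟩
  intro g hg hge
  have := hub g hg (by simp)
  have : G.flowValue s g ≠ lam := fun h => by simp [he g hg h] at hge
  rw [(hd i).2]; omega

lemma mul_succ_le_sum_outEdges (hmax : G.IsMaxFlowValue s t ∅ lam) {c : E → ℕ}
    (hc : ∀ e, lam ≤ c e) (hc_used : ∀ e, G.UsedByMaxFlows s t lam e → lam + 1 ≤ c e)
    {S : Finset V} (hs : s ∈ S) (ht : t ∉ S) : lam * (lam + 1) ≤ ∑ e ∈ G.outEdges S, c e := by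
  have hcross : ∀ f, G.IsFlow s t f → G.flowValue s f = lam → lam ≤ ∑ e ∈ G.outEdges S, f e :=
    fun f hf hval => by
      have := flowValue_le_sum_outEdges hf hs ht
      rw [hval] at this; exact_mod_cast this
  have hsum_le : ∀ f, G.IsFlow s t f → ∑ e ∈ G.outEdges S, f e ≤ #(G.outEdges S) :=
    fun f hf => (sum_le_card_nsmul _ _ 1 fun e _ => hf.1 e).trans (by simp)
  obtain ⟨⟨f, hf, -, hval⟩, -⟩ := hmax
  rcases (hcross f hf hval |>.trans (hsum_le f hf)).lt_or_eq with hlt | heq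
  · calc lam * (lam + 1) ≤ #(G.outEdges S) * lam := by rw [mul_comm]; gcongr; omega
      _ ≤ _ := card_nsmul_le_sum _ _ _ fun e _ => hc e
  · have hused : ∀ e ∈ G.outEdges S, G.UsedByMaxFlows s t lam e := fun e he g hg hgval => by
      have hsum : ∑ e ∈ G.outEdges S, g e = ∑ e ∈ G.outEdges S, 1 := by
        simpa [heq] using (hsum_le g hg).antisymm (heq ▸ hcross g hg hgval)
      exact (sum_eq_sum_iff_of_le fun e _ => hg.1 e).1 hsum e he
    calc lam * (lam + 1) = #(G.outEdges S) • (lam + 1) := by rw [← heq, smul_eq_mul]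
      _ ≤ _ := card_nsmul_le_sum _ _ _ fun e he => hc_used e (hused e he)

lemma exists_capacitated_flow_value_ge (hst : s ≠ t) (hmax : G.IsMaxFlowValue s t ∅ lam)
    {c : E → ℕ} (hc : ∀ e, lam ≤ c e) (hc_used : ∀ e, G.UsedByMaxFlows s t lam e → lam + 1 ≤ c e) :
    ∃ h ≤ c, G.Conserves s t h ∧ lam * (lam + 1) ≤ G.flowValue s h := by
  obtain ⟨h, hhc, hh, S, hs, ht, hout, hin⟩ := G.exists_flow_saturating_cut hst c
  refine ⟨h, hhc, hh, ?_⟩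
  have hin_sum : ∑ e ∈ G.inEdges S, (h e : ℤ) = 0 := sum_eq_zero fun e he => by simp [hin e he]
  rw [flowValue_eq_sum_outEdges_sub_sum_inEdges hh hs ht, hin_sum, sub_zero,
    sum_congr rfl fun e he => by rw [hout e he]]
  exact_mod_cast mul_succ_le_sum_outEdges hmax hc hc_used hs ht

lemma exists_maxFlows_avoiding_not_usedByMaxFlows (hst : s ≠ t)
    (hmax : G.IsMaxFlowValue s t ∅ lam) :
    ∃ g : Fin (lam + 1) → E → ℕ, (∀ i, G.IsFlow s t (g i)) ∧
      ∀ e, ¬ G.UsedByMaxFlows s t lam e →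
        ∃ i, g i e = 0 ∧ G.IsMaxFlowValue s t {e} (G.flowValue s (g i)) := by
  classical
  set c : E → ℕ := fun e => if G.UsedByMaxFlows s t lam e then lam + 1 else lam with hc
  obtain ⟨h, hhc, hh, hval⟩ := exists_capacitated_flow_value_ge (c := c) hst hmax
    (fun e => by simp only [hc]; split_ifs <;> omega) (fun e he => by simp [hc, he])
  obtain ⟨g, hg, hsum⟩ := (G.glue s t).exists_unit_circulations_sum_eq (lam + 1) h
    ((G.conserves_iff_isCirculation_glue hst).1 hh)
    (fun e => (hhc e).trans (by simp only [hc]; split_ifs <;> omega))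
  have hg_flow : ∀ i, G.IsFlow s t (g i) :=
    fun i => ⟨(hg i).2, (G.conserves_iff_isCirculation_glue hst).2 (hg i).1⟩
  -- the `lam + 1` flows carry at least `lam * (lam + 1)` in total, so each is maximum
  have hg_val : ∀ i, G.flowValue s (g i) = lam := by
    have hle : ∀ i ∈ univ, G.flowValue s (g i) ≤ lam := fun i _ => hmax.2 _ (hg_flow i) (by simp)
    refine fun i => (sum_eq_sum_iff_of_le hle).1 (le_antisymm (sum_le_sum hle) ?_) i (mem_univ i)
    rw [flowValue_eq_divergence, ← hsum, map_sum, Finset.sum_apply] at hval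
    simpa [flowValue_eq_divergence, mul_comm] using hval
  refine ⟨g, hg_flow, fun e he => ?_⟩
  obtain ⟨i, hi⟩ : ∃ i, g i e = 0 := by
    by_contra! hall
    have hle : lam + 1 ≤ h e :=
      calc lam + 1 = #(univ : Finset (Fin (lam + 1))) • 1 := by simp
        _ ≤ ∑ i, g i e := card_nsmul_le_sum _ _ _ fun i _ => Nat.one_le_iff_ne_zero.2 (hall i)
        _ = h e := by rw [← Finset.sum_apply, hsum]
    have := hhc e
    simp only [hc, he, if_false] at this
    omega
  refine ⟨i, hi, ⟨⟨g i, hg_flow i, by simpa using hi, rfl⟩, ?_⟩⟩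
  exact fun f hf _ => (hmax.2 f hf (by simp)).trans_eq (hg_val i).symm

end Digraph'

/-- If `λ` is the value of a maximum `(s,t)`-flow of `G`, then there
exists a family `B` of `2λ+1` `(s,t)`-flows of `G` such that for every edge `e`,
`B` contains a flow `f` with `f e = 0` whose value equals the maximum `(s,t)`-flow
value of `G − e` (i.e. `B` contains a maximum `(s,t)`-flow of `G − e`). -/
theorem stmt1 {V E : Type} [Fintype V] [DecidableEq V] [Fintype E] [DecidableEq E]
    (G : Digraph' V E) (s t : V) (hst : s ≠ t) (lam : ℕ)
    (hmax : G.IsMaxFlowValue s t ∅ lam) :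
    ∃ B : Fin (2 * lam + 1) → E → ℕ,
      (∀ i, G.IsFlow s t (B i)) ∧
      ∀ e : E, ∃ i, B i e = 0 ∧
        G.IsMaxFlowValue s t {e} (G.flowValue s (B i)) := by
  obtain ⟨d, hd, hd_used⟩ := Digraph'.exists_flows_avoiding_usedByMaxFlows hst hmax
  obtain ⟨g, hg, hg_unused⟩ := Digraph'.exists_maxFlows_avoiding_not_usedByMaxFlows hst hmax
  have hcard : 2 * lam + 1 = lam + (lam + 1) := by omega
  refine ⟨Fin.append d g ∘ Fin.cast hcard, fun i => ?_, fun e => ?_⟩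
  · simp only [Function.comp_apply]
    refine Fin.addCases (fun j => ?_) (fun j => ?_) (Fin.cast hcard i) <;> simp [hd, hg]
  · by_cases he : G.UsedByMaxFlows s t lam e
    · obtain ⟨j, hj⟩ := hd_used e he
      exact ⟨Fin.cast hcard.symm (Fin.castAdd _ j), by simpa using hj⟩
    · obtain ⟨j, hj⟩ := hg_unused e he
      exact ⟨Fin.cast hcard.symm (Fin.natAdd _ j), by simpa using hj⟩
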